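/- arXiv:2501.09995 — 2 statements merged into one kernel-verified Lean document; each statement's English description precedes it below -/
import Mathlib

section
/- Let β > 0 and ω be real numbers, let Nx, Ny be positive integers, let nx, ny be integers, and set θx = nxπ/Nx, θy = nyπ/Ny and r = β² cos θy / (1 + β² − cos θx). Let α be a complex number satisfying α² − rωα + (ω − 1) = 0, and define w(i,j) = α^{j} · sin(i θx) · sin(j θy) for natural numbers i, j. Then for all i ≥ 1 and j ≥ 1: α² (2(1 + β²) w(i,j) − w(i−1,j) − w(i+1,j)) = (1 − ω)(2(1 + β²) w(i,j) − w(i−1,j) − w(i+1,j)) + ω β² (α² w(i,j−1) + w(i,j+1)), and moreover w(0,j) = w(Nx,j) = w(i,0) = w(i,Ny) = 0. -/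
/-!
Both difference operators act diagonally on `w`: the three-term identity
`sin ((k - 1) θ) + sin ((k + 1) θ) = 2 cos θ sin (k θ)` turns the horizontal difference into
multiplication by `2 (1 + β² - cos θx)` and the weighted vertical sum `α² w(i,j-1) + w(i,j+1)`
into multiplication by `2 α cos θy`. The eigen-relation then reduces to
`(α² - 1 + ω)(1 + β² - cos θx) = ω β² α cos θy`, which is the quadratic for `α` multiplied by
`1 + β² - cos θx`. The boundary values vanish because `Nx θx` and `Ny θy` are integer multiples
of `π`.
-/

open Real

theorem Real.sin_pred_mul_add_sin_succ_mul (θ : ℝ) {k : ℕ} (hk : 1 ≤ k) :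
    sin ((k - 1 : ℕ) * θ) + sin ((k + 1 : ℕ) * θ) = 2 * cos θ * sin (k * θ) := by
  obtain ⟨m, rfl⟩ := Nat.exists_eq_add_of_le' hk
  have hpred : ((m + 1 - 1 : ℕ) : ℝ) * θ = (m + 1 : ℕ) * θ - θ := by push_cast; ring
  have hsucc : ((m + 1 + 1 : ℕ) : ℝ) * θ = (m + 1 : ℕ) * θ + θ := by push_cast; ring
  rw [hpred, hsucc, sin_sub, sin_add]
  ring

theorem Real.sin_natCast_mul_intCast_mul_pi_div (N : ℕ) (n : ℤ) :
    sin (N * (n * π / N)) = 0 := by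
  rcases Nat.eq_zero_or_pos N with rfl | hN
  · simp
  · rw [mul_div_cancel₀ _ (by positivity), sin_int_mul_pi]

theorem line_sor_eigenrelation_of_separated {R : Type*} [CommRing R]
    {α β ω r cx cy : R} {X Y : ℕ → R} {w : ℕ → ℕ → R} (hw : ∀ i j, w i j = α ^ j * X i * Y j)
    {i j : ℕ} (hX : X (i - 1) + X (i + 1) = 2 * cx * X i)
    (hY : Y (j - 1) + Y (j + 1) = 2 * cy * Y j) (hj : 1 ≤ j)
    (hα : α ^ 2 - r * ω * α + (ω - 1) = 0) (hr : r * (1 + β ^ 2 - cx) = β ^ 2 * cy) :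
    α ^ 2 * (2 * (1 + β ^ 2) * w i j - w (i - 1) j - w (i + 1) j)
      = (1 - ω) * (2 * (1 + β ^ 2) * w i j - w (i - 1) j - w (i + 1) j)
        + ω * β ^ 2 * (α ^ 2 * w i (j - 1) + w i (j + 1)) := by
  obtain ⟨l, rfl⟩ := Nat.exists_eq_add_of_le' hj
  simp only [Nat.add_sub_cancel] at hY ⊢
  simp only [hw]
  linear_combination
    (-(α ^ 2 - 1 + ω) * α ^ (l + 1) * Y (l + 1)) * hX
      + (-ω * β ^ 2 * α ^ (l + 2) * X i) * hY
      + (2 * (1 + β ^ 2 - cx) * α ^ (l + 1) * X i * Y (l + 1)) * hα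
      + (2 * ω * α ^ (l + 2) * X i * Y (l + 1)) * hr

theorem line_sor_second_order_eigenrelation_general
    (β ω : ℝ)
    (Nx Ny : ℕ)
    (nx ny : ℤ)
    (θx θy r : ℝ)
    (hθx : θx = nx * Real.pi / Nx) (hθy : θy = ny * Real.pi / Ny)
    (hr : r = β ^ 2 * Real.cos θy / (1 + β ^ 2 - Real.cos θx))
    (α : ℂ) (hα : α ^ 2 - (r : ℂ) * (ω : ℂ) * α + ((ω : ℂ) - 1) = 0)
    (w : ℕ → ℕ → ℂ)
    (hw : ∀ i j : ℕ,
      w i j = α ^ j * (Real.sin (i * θx) : ℂ) * (Real.sin (j * θy) : ℂ)) :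
    (∀ i j : ℕ, 1 ≤ i → 1 ≤ j →
      α ^ 2 * (2 * (1 + (β : ℂ) ^ 2) * w i j - w (i - 1) j - w (i + 1) j)
        = (1 - (ω : ℂ)) * (2 * (1 + (β : ℂ) ^ 2) * w i j - w (i - 1) j - w (i + 1) j)
          + (ω : ℂ) * (β : ℂ) ^ 2 * (α ^ 2 * w i (j - 1) + w i (j + 1))) ∧
    (∀ i j : ℕ, w 0 j = 0 ∧ w Nx j = 0 ∧ w i 0 = 0 ∧ w i Ny = 0) := by
  -- The denominator vanishes only when `β = 0` and `cos θx = 1`, where `r = 0` is harmless.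
  have hrD : r * (1 + β ^ 2 - cos θx) = β ^ 2 * cos θy := by
    rw [hr, div_mul_cancel_of_imp]
    intro hD
    have hβ : β ^ 2 = 0 := by nlinarith [cos_le_one θx, sq_nonneg β]
    rw [hβ, zero_mul]
  have hrDC : (r : ℂ) * (1 + (β : ℂ) ^ 2 - (cos θx : ℂ)) = (β : ℂ) ^ 2 * (cos θy : ℂ) := by
    exact_mod_cast hrD
  refine ⟨fun i j hi hj => ?_, fun i j => ?_⟩
  · refine line_sor_eigenrelation_of_separated hw ?_ ?_ hj hα hrDC
    · exact_mod_cast sin_pred_mul_add_sin_succ_mul θx hi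
    · exact_mod_cast sin_pred_mul_add_sin_succ_mul θy hj
  · subst hθx hθy
    simp [hw, sin_natCast_mul_intCast_mul_pi_div]

/-- Separated-variables eigenfunction relation for the line SOR iteration of the
central second-order discretization of the Poisson equation, together with the
homogeneous Dirichlet boundary values. -/
theorem line_sor_second_order_eigenrelation
    (β ω : ℝ) (hβ : 0 < β)
    (Nx Ny : ℕ) (hNx : 0 < Nx) (hNy : 0 < Ny)
    (nx ny : ℤ)
    (θx θy r : ℝ)
    (hθx : θx = nx * Real.pi / Nx) (hθy : θy = ny * Real.pi / Ny)
    (hr : r = β ^ 2 * Real.cos θy / (1 + β ^ 2 - Real.cos θx))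
    (α : ℂ) (hα : α ^ 2 - (r : ℂ) * (ω : ℂ) * α + ((ω : ℂ) - 1) = 0)
    (w : ℕ → ℕ → ℂ)
    (hw : ∀ i j : ℕ,
      w i j = α ^ j * (Real.sin (i * θx) : ℂ) * (Real.sin (j * θy) : ℂ)) :
    (∀ i j : ℕ, 1 ≤ i → 1 ≤ j →
      α ^ 2 * (2 * (1 + (β : ℂ) ^ 2) * w i j - w (i - 1) j - w (i + 1) j)
        = (1 - (ω : ℂ)) * (2 * (1 + (β : ℂ) ^ 2) * w i j - w (i - 1) j - w (i + 1) j)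
          + (ω : ℂ) * (β : ℂ) ^ 2 * (α ^ 2 * w i (j - 1) + w i (j + 1))) ∧
    (∀ i j : ℕ, w 0 j = 0 ∧ w Nx j = 0 ∧ w i 0 = 0 ∧ w i Ny = 0) :=
  line_sor_second_order_eigenrelation_general β ω Nx Ny nx ny θx θy r hθx hθy hr α hα w hw
end

section
/- Let Δx, m, n be real numbers with 0 < Δx ≤ 1, n > 0 and m + 1 < 0. Define sh(k) = sinh(kΔx)/Δx and f(k) = (m − n·sh(k)²)·tanh(k) + sh(k). Then the set {k > 0 : f(k) = 0} has at most two elements. -/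
/-!
For `k > 0` we have `f k = -(sh k · tanh k) · g k` with `g k = n·sh k + (-m)/sh k - coth k`
and `sh k · tanh k > 0`, so it suffices that `g` is strictly convex on `(0, ∞)`. Its second
derivative is `nΔx sinh(kΔx) + (-m)Δx³(cosh²(kΔx) + 1)/sinh³(kΔx) - 2 cosh k/sinh³ k`. Since
`t ↦ t³ cosh t/sinh³ t` is decreasing and `kΔx ≤ k`, the negative term is at most
`2Δx³ cosh(kΔx)/sinh³(kΔx)`, which is beaten by the middle term because
`2 cosh s < cosh² s + 1` for `s ≠ 0` and `-m ≥ 1`.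
-/

open Real Set

theorem Set.encard_le_two_of_not_lt_lt {α : Type*} [LinearOrder α] {S : Set α}
    (hS : ∀ a ∈ S, ∀ b ∈ S, ∀ c ∈ S, a < b → b < c → False) : S.encard ≤ 2 := by
  by_contra! h
  obtain ⟨t, hts, ht⟩ := exists_subset_encard_eq (Order.add_one_le_of_lt h)
  have hfin : t.Finite := finite_of_encard_eq_coe ht
  have hcard : hfin.toFinset.card = 3 := by
    rw [← Nat.cast_inj (R := ℕ∞), ← encard_coe_eq_coe_finsetCard, Finite.coe_toFinset, ht]
    rfl
  have hmem (i : Fin 3) : hfin.toFinset.orderEmbOfFin hcard i ∈ S :=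
    hts ((Finite.mem_toFinset hfin).1 (Finset.orderEmbOfFin_mem _ hcard i))
  exact hS _ (hmem 0) _ (hmem 1) _ (hmem 2) (OrderEmbedding.strictMono _ (by decide))
    (OrderEmbedding.strictMono _ (by decide))

theorem StrictConvexOn.encard_inter_preimage_singleton_le_two {s : Set ℝ} {f : ℝ → ℝ}
    (hf : StrictConvexOn ℝ s f) (c : ℝ) : (s ∩ f ⁻¹' {c}).encard ≤ 2 := by
  refine encard_le_two_of_not_lt_lt ?_
  rintro a ⟨has, hfa⟩ b ⟨-, hfb⟩ c ⟨hcs, hfc⟩ hab hbc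
  have := hf.lt_on_openSegment has hcs (hab.trans hbc).ne (Ioo_subset_openSegment ⟨hab, hbc⟩)
  simp_all

theorem strictConvexOn_of_hasDerivAt2_pos {D : Set ℝ} (hD : Convex ℝ D) (hDo : IsOpen D)
    {f f' f'' : ℝ → ℝ} (hf : ∀ x ∈ D, HasDerivAt f (f' x) x)
    (hf' : ∀ x ∈ D, HasDerivAt f' (f'' x) x) (hf'' : ∀ x ∈ D, 0 < f'' x) :
    StrictConvexOn ℝ D f := by
  have hmono : StrictMonoOn f' D := strictMonoOn_of_hasDerivWithinAt_pos hD
    (fun x hx ↦ (hf' x hx).continuousAt.continuousWithinAt)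
    (fun x hx ↦ (hf' x (interior_subset hx)).hasDerivWithinAt)
    (fun x hx ↦ hf'' x (interior_subset hx))
  refine StrictMonoOn.strictConvexOn_of_deriv hD
    (fun x hx ↦ (hf x hx).continuousAt.continuousWithinAt) ?_
  rw [hDo.interior_eq]
  exact hmono.congr fun x hx ↦ ((hf x hx).deriv).symm

theorem nonneg_of_hasDerivAt_nonneg {f f' : ℝ → ℝ} (hf : ∀ x, HasDerivAt f (f' x) x)
    (h0 : f 0 = 0) (hf' : ∀ x, 0 < x → 0 ≤ f' x) {x : ℝ} (hx : 0 ≤ x) : 0 ≤ f x := by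
  have := monotoneOn_of_hasDerivWithinAt_nonneg (convex_Ici 0)
    (fun y _ ↦ (hf y).continuousAt.continuousWithinAt) (fun y _ ↦ (hf y).hasDerivWithinAt)
    (by simpa using hf') self_mem_Ici hx hx
  rwa [h0] at this

theorem Real.sinh_le_mul_cosh {x : ℝ} (hx : 0 ≤ x) : sinh x ≤ x * cosh x := by
  have key := nonneg_of_hasDerivAt_nonneg (f := fun t ↦ t * cosh t - sinh t)
    (fun t ↦ ((hasDerivAt_id t).mul (hasDerivAt_cosh t)).sub (hasDerivAt_sinh t)) (by simp)
    (fun t ht ↦ by simp [(sinh_pos_iff.2 ht).le, ht.le, mul_nonneg]) hx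
  simpa using key

theorem Real.three_mul_sinh_mul_cosh_le {x : ℝ} (hx : 0 ≤ x) :
    3 * sinh x * cosh x ≤ x * (2 * cosh x ^ 2 + 1) := by
  have hderiv (t : ℝ) : HasDerivAt (fun t ↦ t * (2 * cosh t ^ 2 + 1) - 3 * sinh t * cosh t)
      (4 * sinh t * (t * cosh t - sinh t)) t := by
    refine (((hasDerivAt_id t).mul (((hasDerivAt_cosh t).pow 2).const_mul 2 |>.add_const 1)).sub
      (((hasDerivAt_sinh t).const_mul 3).mul (hasDerivAt_cosh t))).congr_deriv ?_
    simp only [id_eq, Pi.pow_apply]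
    linear_combination -cosh_sq t
  have key := nonneg_of_hasDerivAt_nonneg hderiv (by simp)
    (fun t ht ↦ mul_nonneg (by positivity [sinh_pos_iff.2 ht])
      (sub_nonneg.2 (sinh_le_mul_cosh ht.le))) hx
  simpa using key

theorem Real.antitoneOn_pow_three_mul_cosh_div_sinh_pow_three :
    AntitoneOn (fun t ↦ t ^ 3 * cosh t / sinh t ^ 3) (Ioi 0) := by
  have hderiv (t : ℝ) (ht : 0 < t) : HasDerivAt (fun t ↦ t ^ 3 * cosh t / sinh t ^ 3)
      (t ^ 2 * (3 * sinh t * cosh t - t * (2 * cosh t ^ 2 + 1)) / sinh t ^ 4) t := by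
    have hsinh : sinh t ≠ 0 := (sinh_pos_iff.2 ht).ne'
    refine (((hasDerivAt_pow 3 t).mul (hasDerivAt_cosh t)).div ((hasDerivAt_sinh t).pow 3)
      (pow_ne_zero 3 hsinh)).congr_deriv ?_
    simp only [Pi.pow_apply, Pi.mul_apply]
    field_simp
    linear_combination (-t ^ 3 * sinh t ^ 2) * cosh_sq t
  refine antitoneOn_of_hasDerivWithinAt_nonpos (convex_Ioi 0)
    (fun t ht ↦ (hderiv t ht).continuousAt.continuousWithinAt)
    (fun t ht ↦ (hderiv t (by simpa using ht)).hasDerivWithinAt) fun t ht ↦ ?_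
  rw [interior_Ioi] at ht
  have := three_mul_sinh_mul_cosh_le (le_of_lt ht)
  exact div_nonpos_of_nonpos_of_nonneg (mul_nonpos_of_nonneg_of_nonpos (by positivity)
    (by linarith)) (by positivity)

noncomputable def discreteSinh (Δx k : ℝ) : ℝ := sinh (k * Δx) / Δx

-- The characteristic function divided by `-(sh k · tanh k)`, with `a = -m`.
noncomputable def reducedChar (Δx n a k : ℝ) : ℝ :=
  n * discreteSinh Δx k + a / discreteSinh Δx k - cosh k / sinh k

-- The characteristic function divided by `-(sh k · tanh k)`, with `a = -m`.
noncomputable def reducedCharDeriv (Δx n a k : ℝ) : ℝ :=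
  n * cosh (k * Δx) - a * Δx ^ 2 * cosh (k * Δx) / sinh (k * Δx) ^ 2 + 1 / sinh k ^ 2

section
variable {Δx n a k : ℝ}

theorem hasDerivAt_reducedChar (hΔx : Δx ≠ 0) (hk : k ≠ 0) :
    HasDerivAt (reducedChar Δx n a) (reducedCharDeriv Δx n a k) k := by
  have hsinh : sinh k ≠ 0 := sinh_ne_zero.2 hk
  have hsinhΔ : sinh (k * Δx) ≠ 0 := sinh_ne_zero.2 (mul_ne_zero hk hΔx)
  have hsh : HasDerivAt (discreteSinh Δx) (cosh (k * Δx)) k := by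
    refine ((hasDerivAt_mul_const Δx).sinh.div_const Δx).congr_deriv ?_
    field_simp
  refine (((hsh.const_mul n).add ((hasDerivAt_const k a).div hsh (div_ne_zero hsinhΔ hΔx))).sub
    ((hasDerivAt_cosh k).div (hasDerivAt_sinh k) hsinh)).congr_deriv ?_
  unfold reducedCharDeriv discreteSinh
  field_simp
  linear_combination (sinh (k * Δx) ^ 2) * cosh_sq k

theorem hasDerivAt_reducedCharDeriv (hΔx : Δx ≠ 0) (hk : k ≠ 0) :
    HasDerivAt (reducedCharDeriv Δx n a) (n * Δx * sinh (k * Δx) +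
      a * Δx ^ 3 * (cosh (k * Δx) ^ 2 + 1) / sinh (k * Δx) ^ 3 - 2 * cosh k / sinh k ^ 3) k := by
  have hsinh : sinh k ≠ 0 := sinh_ne_zero.2 hk
  have hsinhΔ : sinh (k * Δx) ≠ 0 := sinh_ne_zero.2 (mul_ne_zero hk hΔx)
  have hlin : HasDerivAt (fun y ↦ y * Δx) Δx k := hasDerivAt_mul_const Δx
  refine (((hlin.cosh.const_mul n).sub ((hlin.cosh.const_mul (a * Δx ^ 2)).div (hlin.sinh.pow 2)
    (pow_ne_zero 2 hsinhΔ))).add ((hasDerivAt_const k (1 : ℝ)).div ((hasDerivAt_sinh k).pow 2)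
    (pow_ne_zero 2 hsinh))).congr_deriv ?_
  simp only [Pi.pow_apply, Nat.cast_ofNat, Nat.add_one_sub_one, pow_one]
  field_simp
  linear_combination (a * Δx ^ 3 * sinh k ^ 3) * cosh_sq (k * Δx)

theorem cosh_div_sinh_pow_three_le (hΔx0 : 0 < Δx) (hΔx1 : Δx ≤ 1) (hk : 0 < k) :
    cosh k / sinh k ^ 3 ≤ Δx ^ 3 * cosh (k * Δx) / sinh (k * Δx) ^ 3 := by
  have h := antitoneOn_pow_three_mul_cosh_div_sinh_pow_three (mem_Ioi.2 (mul_pos hk hΔx0))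
    (mem_Ioi.2 hk) (mul_le_of_le_one_right hk.le hΔx1)
  dsimp only at h
  rw [mul_pow] at h
  calc cosh k / sinh k ^ 3 = k ^ 3 * cosh k / sinh k ^ 3 / k ^ 3 := by field_simp
    _ ≤ k ^ 3 * Δx ^ 3 * cosh (k * Δx) / sinh (k * Δx) ^ 3 / k ^ 3 := by gcongr
    _ = Δx ^ 3 * cosh (k * Δx) / sinh (k * Δx) ^ 3 := by field_simp

theorem strictConvexOn_reducedChar (hΔx0 : 0 < Δx) (hΔx1 : Δx ≤ 1) (hn : 0 ≤ n) (ha : 1 ≤ a) :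
    StrictConvexOn ℝ (Ioi 0) (reducedChar Δx n a) := by
  refine strictConvexOn_of_hasDerivAt2_pos (convex_Ioi 0) isOpen_Ioi
    (fun k hk ↦ hasDerivAt_reducedChar hΔx0.ne' (ne_of_gt hk))
    (fun k hk ↦ hasDerivAt_reducedCharDeriv hΔx0.ne' (ne_of_gt hk)) fun k hk ↦ ?_
  have hk : 0 < k := hk
  have hkΔ : 0 < k * Δx := mul_pos hk hΔx0
  have hsinhΔ : 0 < sinh (k * Δx) := sinh_pos_iff.2 hkΔ
  -- `2 cosh s < cosh² s + 1` is `(cosh s - 1)² > 0`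
  have hcosh : 2 * cosh (k * Δx) < cosh (k * Δx) ^ 2 + 1 := by
    nlinarith [one_lt_cosh.2 hkΔ.ne']
  have hdominate :
      2 * cosh k / sinh k ^ 3 < a * Δx ^ 3 * (cosh (k * Δx) ^ 2 + 1) / sinh (k * Δx) ^ 3 :=
    calc 2 * cosh k / sinh k ^ 3 ≤ 2 * (Δx ^ 3 * cosh (k * Δx) / sinh (k * Δx) ^ 3) := by
          rw [mul_div_assoc]
          exact mul_le_mul_of_nonneg_left (cosh_div_sinh_pow_three_le hΔx0 hΔx1 hk) zero_le_two
      _ = Δx ^ 3 * (2 * cosh (k * Δx)) / sinh (k * Δx) ^ 3 := by ring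
      _ < Δx ^ 3 * (cosh (k * Δx) ^ 2 + 1) / sinh (k * Δx) ^ 3 := by gcongr
      _ ≤ a * Δx ^ 3 * (cosh (k * Δx) ^ 2 + 1) / sinh (k * Δx) ^ 3 := by
          gcongr
          exact le_mul_of_one_le_left (by positivity) ha
  have : 0 ≤ n * Δx * sinh (k * Δx) := by positivity
  linarith

theorem char_eq_neg_mul_reducedChar (m : ℝ) (hΔx : Δx ≠ 0) (hk : k ≠ 0) :
    (m - n * discreteSinh Δx k ^ 2) * tanh k + discreteSinh Δx k
      = -(discreteSinh Δx k * tanh k) * reducedChar Δx n (-m) k := by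
  have hsinh : sinh k ≠ 0 := sinh_ne_zero.2 hk
  have hsinhΔ : sinh (k * Δx) ≠ 0 := sinh_ne_zero.2 (mul_ne_zero hk hΔx)
  unfold reducedChar discreteSinh
  rw [tanh_eq_sinh_div_cosh]
  field_simp
  ring

end

/-- Robin boundary conditions, Case IV (`n > 0`, `m + 1 < 0`, `0 < Δx ≤ 1`): the
hyperbolic characteristic function `f(k) = (m − n·sh(k)²)·tanh(k) + sh(k)`, with
`sh(k) = sinh(kΔx)/Δx`, has at most two positive roots. -/
theorem robin_case_IV_at_most_two_positive_roots
    (Δx m n : ℝ) (hΔx0 : 0 < Δx) (hΔx1 : Δx ≤ 1) (hn : 0 < n) (hm : m + 1 < 0)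
    (sh : ℝ → ℝ) (hsh : ∀ k, sh k = Real.sinh (k * Δx) / Δx)
    (f : ℝ → ℝ) (hf : ∀ k, f k = (m - n * sh k ^ 2) * Real.tanh k + sh k) :
    {k : ℝ | 0 < k ∧ f k = 0}.encard ≤ 2 := by
  have hsh_eq : sh = discreteSinh Δx := funext hsh
  have hroots : {k : ℝ | 0 < k ∧ f k = 0} ⊆ Ioi 0 ∩ reducedChar Δx n (-m) ⁻¹' {0} := by
    rintro k ⟨hk, hfk⟩
    have hfactor : 0 < discreteSinh Δx k * tanh k := by
      rw [discreteSinh, tanh_eq_sinh_div_cosh]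
      have := sinh_pos_iff.2 (mul_pos hk hΔx0)
      have := sinh_pos_iff.2 hk
      positivity
    rw [hf, hsh_eq, char_eq_neg_mul_reducedChar m hΔx0.ne' hk.ne'] at hfk
    exact ⟨hk, by simpa [hfactor.ne'] using hfk⟩
  have hconvex := strictConvexOn_reducedChar hΔx0 hΔx1 hn.le (show 1 ≤ -m by linarith)
  exact (encard_mono hroots).trans (hconvex.encard_inter_preimage_singleton_le_two 0)
end
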